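/- arXiv:1906.10396 — 6 statements merged into one kernel-verified Lean document; each statement's English description precedes it below -/
import Mathlib

section
/- Let n and r be positive integers with r < n. Suppose Ŵ ∈ ℝ^{(r+1)×(n−r)} satisfies rank(Ŵ) ≤ 1 and, for every k = 1,…,n, the k-th antidiagonal sum vanishes: ∑_{i+j=k+1} Ŵ(i,j) = 0 (the sum ranging over valid indices 1 ≤ i ≤ r+1, 1 ≤ j ≤ n−r). Then Ŵ = 0. -/
/-!
A matrix of rank at most one is an outer product `u vᵀ`, and the `k`-th antidiagonal sum of
`u vᵀ` is the coefficient of `X ^ k` in `p_u * p_v`, where `p_u = ∑ i, u i X ^ i`. So all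
antidiagonal sums vanish iff `p_u * p_v = 0`, which in a domain forces `u = 0` or `v = 0`.
-/

open Polynomial

namespace Matrix

variable {K : Type*} [Field K]

theorem exists_eq_vecMulVec_of_rank_le_one {m n : Type*} [Fintype n] [DecidableEq n]
    (A : Matrix m n K) (h : A.rank ≤ 1) : ∃ u v, A = vecMulVec u v := by
  obtain ⟨w, hw⟩ := finrank_le_one_iff.mp h
  choose c hc using fun j ↦ hw ⟨A *ᵥ Pi.single j 1, LinearMap.mem_range_self _ _⟩
  refine ⟨w, c, ext fun i j ↦ ?_⟩
  simpa [vecMulVec_apply, mul_comm] using (congrFun (congrArg Subtype.val (hc j)) i).symm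

variable {R : Type*} [CommSemiring R] {m n : ℕ}

def antidiagSum (W : Matrix (Fin m) (Fin n) R) (k : ℕ) : R :=
  ∑ i : Fin m, ∑ j : Fin n, if (i : ℕ) + j = k then W i j else 0

theorem antidiagSum_eq_zero_of_le (W : Matrix (Fin m) (Fin n) R) {k : ℕ} (hk : m + n - 1 ≤ k) :
    W.antidiagSum k = 0 :=
  Finset.sum_eq_zero fun i _ ↦ Finset.sum_eq_zero fun j _ ↦ if_neg (by omega)

theorem antidiagSum_vecMulVec [DecidableEq R] (u : Fin m → R) (v : Fin n → R) (k : ℕ) :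
    (vecMulVec u v).antidiagSum k = (ofFn m u * ofFn n v).coeff k := by
  simp only [antidiagSum, ofFn_eq_sum_monomial, Finset.sum_mul_sum, monomial_mul_monomial,
    finsetSum_coeff, coeff_monomial, vecMulVec_apply]

theorem eq_zero_of_rank_le_one_of_antidiagSum_eq_zero (W : Matrix (Fin m) (Fin n) K)
    (hrank : W.rank ≤ 1) (hW : ∀ k < m + n - 1, W.antidiagSum k = 0) : W = 0 := by
  classical
  obtain ⟨u, v, rfl⟩ := exists_eq_vecMulVec_of_rank_le_one W hrank
  have hprod : ofFn m u * ofFn n v = 0 := by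
    ext k
    rw [← antidiagSum_vecMulVec, coeff_zero]
    rcases lt_or_ge k (m + n - 1) with hk | hk
    · exact hW k hk
    · exact antidiagSum_eq_zero_of_le _ hk
  rcases mul_eq_zero.mp hprod with hu | hv
  · rw [(ofFn m).map_eq_zero_iff (injective_ofFn m)] at hu
    simp [hu]
  · rw [(ofFn n).map_eq_zero_iff (injective_ofFn n)] at hv
    ext; simp [hv, vecMulVec_apply]

end Matrix

theorem stmt2_general (n r : ℕ) (hrn : r < n)
    (W : Matrix (Fin (r + 1)) (Fin (n - r)) ℝ)
    (hrank : Matrix.rank W ≤ 1)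
    (hdiag : ∀ k : Fin n, ∑ i : Fin (r + 1), ∑ j : Fin (n - r),
        (if (i : ℕ) + (j : ℕ) = (k : ℕ) then W i j else 0) = 0) :
    W = 0 :=
  W.eq_zero_of_rank_le_one_of_antidiagSum_eq_zero hrank fun k hk ↦ hdiag ⟨k, by omega⟩

/-- if `Ŵ ∈ ℝ^{(r+1)×(n-r)}` has rank at most 1 and all of its antidiagonal sums
vanish (0-based: `∑_{i+j=k} Ŵ(i,j) = 0` for `k = 0,…,n-1`), then `Ŵ = 0`. -/
theorem stmt2 (n r : ℕ) (hn : 0 < n) (hr : 0 < r) (hrn : r < n)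
    (W : Matrix (Fin (r + 1)) (Fin (n - r)) ℝ)
    (hrank : Matrix.rank W ≤ 1)
    (hdiag : ∀ k : Fin n, ∑ i : Fin (r + 1), ∑ j : Fin (n - r),
        (if (i : ℕ) + (j : ℕ) = (k : ℕ) then W i j else 0) = 0) :
    W = 0 :=
  stmt2_general n r hrn W hrank hdiag
end

section
/- Let n and r be positive integers with r < n, and let R ∈ ℝ^{1×(r+1)} be a nonzero row vector. Then the linear map G_R : ℝⁿ → ℝ^{1×(n−r)} defined by G_R(y) = R · H_{r+1}(y) is surjective. -/
/-!
Let `k` be the last index with `R k ≠ 0`. The `j`-th entry of `R ⬝ H_{r+1}(y)` is then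
`∑_{i ≤ k} R i * y (i + j)`, in which `y (k + j)` enters with the nonzero coefficient `R k` and every
other `y` has a smaller index. So the entries of `y` can be chosen one after the other by forward
substitution.
-/

open Finset

/-- The Hankel operator `H_{r+1} : ℝⁿ → ℝ^{(r+1)×(n-r)}` (0-based indices). -/
def hankel (n r : ℕ) (hrn : r < n) (y : Fin n → ℝ) :
    Matrix (Fin (r + 1)) (Fin (n - r)) ℝ :=
  fun i j => y ⟨i.val + j.val, by omega⟩

theorem exists_last_ne_zero {ι M : Type*} [Fintype ι] [LinearOrder ι] [Zero M] {a : ι → M}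
    (ha : a ≠ 0) : ∃ k, a k ≠ 0 ∧ ∀ i, k < i → a i = 0 := by
  classical
  obtain ⟨i₀, hi₀⟩ := Function.ne_iff.mp ha
  obtain ⟨k, hk, hmax⟩ :=
    (univ.filter (a · ≠ 0)).exists_max_image id ⟨i₀, by simpa using hi₀⟩
  refine ⟨k, by simpa using hk, fun i hki => ?_⟩
  by_contra hi
  exact (hmax i (by simpa using hi)).not_gt hki

section ForwardSubstitution

variable {K : Type*} [Field K]

theorem exists_forall_sum_range_mul_add_eq (c : ℕ → K) {k : ℕ} (hk : c k ≠ 0) (z : ℕ → K)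
    (N : ℕ) : ∃ f : ℕ → K, ∀ j < N, ∑ i ∈ range (k + 1), c i * f (i + j) = z j := by
  induction N with
  | zero => exact ⟨0, fun j hj => absurd hj j.not_lt_zero⟩
  | succ N ih =>
    obtain ⟨f, hf⟩ := ih
    -- Only the value at `k + N` changes, and equation `j < N` only reads indices below `k + N`.
    set f' := Function.update f (k + N) ((z N - ∑ i ∈ range k, c i * f (i + N)) / c k)
    have hf'_lt : ∀ m < k + N, f' m = f m := fun m hm => Function.update_of_ne hm.ne _ _
    refine ⟨f', fun j hj => ?_⟩
    rcases (Nat.lt_succ_iff.mp hj).lt_or_eq with hj | rfl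
    · rw [← hf j hj]
      refine sum_congr rfl fun i hi => ?_
      rw [hf'_lt _ (by rw [mem_range] at hi; omega)]
    · have hf'_new : f' (k + j) = (z j - ∑ i ∈ range k, c i * f (i + j)) / c k :=
        Function.update_self _ _ _
      rw [sum_range_succ, hf'_new,
        sum_congr rfl fun i hi => by rw [hf'_lt _ (by rw [mem_range] at hi; omega)]]
      field_simp
      ring

theorem exists_forall_sum_mul_add_eq {m : ℕ} {a : Fin m → K} (ha : a ≠ 0) (z : ℕ → K) (N : ℕ) :
    ∃ f : ℕ → K, ∀ j < N, ∑ i, a i * f (i + j) = z j := by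
  obtain ⟨k, hk, hlast⟩ := exists_last_ne_zero ha
  set c : ℕ → K := fun i => if h : i < m then a ⟨i, h⟩ else 0
  have hc : ∀ i : Fin m, c i = a i := fun i => dif_pos i.isLt
  obtain ⟨f, hf⟩ := exists_forall_sum_range_mul_add_eq c (k := k) (by rwa [hc]) z N
  refine ⟨f, fun j hj => ?_⟩
  calc ∑ i, a i * f (i + j) = ∑ i : Fin m, c i * f (i + j) := by simp only [hc]
    _ = ∑ i ∈ range m, c i * f (i + j) := Fin.sum_univ_eq_sum_range (fun i => c i * f (i + j)) m
    _ = ∑ i ∈ range (k + 1), c i * f (i + j) := by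
      refine (sum_subset (range_subset_range.2 k.isLt) fun i hi hik => ?_).symm
      rw [mem_range] at hi hik
      rw [hc ⟨i, hi⟩, hlast ⟨i, hi⟩ (Fin.lt_def.2 (show (k : ℕ) < i by omega)), zero_mul]
    _ = z j := hf j hj

end ForwardSubstitution

theorem stmt7_general (n r : ℕ) (hrn : r < n)
    (R : Matrix (Fin 1) (Fin (r + 1)) ℝ) (hR : R ≠ 0) :
    Function.Surjective (fun y : Fin n → ℝ => R * hankel n r hrn y) := by
  intro Z
  have hR0 : R 0 ≠ 0 := fun h => hR (funext fun i => by rwa [Subsingleton.elim i 0])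
  obtain ⟨f, hf⟩ := exists_forall_sum_mul_add_eq hR0
    (fun j => if h : j < n - r then Z 0 ⟨j, h⟩ else 0) (n - r)
  refine ⟨fun m => f m, ?_⟩
  ext i j
  rw [Subsingleton.elim i 0]
  simpa [Matrix.mul_apply, hankel] using hf j j.isLt

/-- for any nonzero row vector `R ∈ ℝ^{1×(r+1)}`, the linear map
`G_R : ℝⁿ → ℝ^{1×(n-r)}`, `y ↦ R ⬝ H_{r+1}(y)`, is surjective. -/
theorem stmt7 (n r : ℕ) (hn : 0 < n) (hr : 0 < r) (hrn : r < n)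
    (R : Matrix (Fin 1) (Fin (r + 1)) ℝ) (hR : R ≠ 0) :
    Function.Surjective (fun y : Fin n → ℝ => R * hankel n r hrn y) :=
  stmt7_general n r hrn R hR
end

section
/- Let n, N and r be positive integers with r < n, and let R ∈ ℝ^{1×(r+1)} be a nonzero row vector. Then the linear map G_R : ℝ^{Nn} → ℝ^{1×N(n−r)} defined by G_R(vec(y₁,…,y_N)) = R · [H_{r+1}(y₁) H_{r+1}(y₂) ⋯ H_{r+1}(y_N)] is surjective. -/
/-- The operator `L : ℝ^{Nn} → ℝ^{(r+1)×N(n-r)}`,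
`vec(y₁,…,y_N) ↦ [H_{r+1}(y₁) ⋯ H_{r+1}(y_N)]` (horizontal concatenation, with columns
indexed by `Fin N × Fin (n-r)`). -/
def hankelCat (n N r : ℕ) (hrn : r < n) (y : Fin N → Fin n → ℝ) :
    Matrix (Fin (r + 1)) (Fin N × Fin (n - r)) ℝ :=
  fun i p => hankel n r hrn (y p.1) i p.2

/-!
The transpose of `y ↦ ρ ᵥ* hankel y` sends `a ∈ ℝ^{n-r}` to the first `n` coefficients of the
polynomial product `a(X) ρ(X)`, which has degree `< n`. Since `ℝ[X]` is a domain and `ρ(X) ≠ 0`,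
this transpose is injective, so the map itself is surjective. The blocks of `hankelCat` involve
disjoint variables, so surjectivity holds blockwise.
-/

open Polynomial Matrix

theorem vecMul_hankel_single_dotProduct {n r : ℕ} (hrn : r < n) (ρ : Fin (r + 1) → ℝ)
    (a : Fin (n - r) → ℝ) (l : Fin n) :
    ρ ᵥ* hankel n r hrn (Pi.single l 1) ⬝ᵥ a = (ofFn (n - r) a * ofFn (r + 1) ρ).coeff l := by
  simp only [ofFn_eq_sum_monomial, Finset.sum_mul, Finset.mul_sum, monomial_mul_monomial,
    finsetSum_coeff, coeff_monomial, vecMul, dotProduct, hankel, Pi.single_apply, Fin.ext_iff]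
  rw [Finset.sum_comm]
  refine Finset.sum_congr rfl fun j _ => Finset.sum_congr rfl fun i _ => ?_
  split_ifs <;> first | omega | ring

theorem eq_zero_of_forall_vecMul_hankel {n r : ℕ} (hrn : r < n) {ρ : Fin (r + 1) → ℝ}
    (hρ : ρ ≠ 0) {φ : Module.Dual ℝ (Fin (n - r) → ℝ)}
    (hφ : ∀ y, φ (ρ ᵥ* hankel n r hrn y) = 0) : φ = 0 := by
  let e := LinearEquiv.piRing ℝ ℝ (Fin (n - r)) ℝ
  have hφ_apply (v : Fin (n - r) → ℝ) : φ v = v ⬝ᵥ e φ := by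
    rw [← e.symm_apply_apply φ, LinearEquiv.piRing_symm_apply, e.apply_symm_apply]
    rfl
  have hprod : ofFn (n - r) (e φ) * ofFn (r + 1) ρ = 0 := by
    ext l
    rw [coeff_zero]
    rcases lt_or_ge l n with hl | hl
    · rw [← vecMul_hankel_single_dotProduct hrn ρ (e φ) ⟨l, hl⟩, ← hφ_apply, hφ]
    · refine coeff_eq_zero_of_natDegree_lt (natDegree_mul_le.trans_lt ?_)
      have := ofFn_natDegree_lt (by omega : 1 ≤ n - r) (e φ)
      have := ofFn_natDegree_lt (by omega : 1 ≤ r + 1) ρ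
      omega
  have hρ_poly : ofFn (r + 1) ρ ≠ 0 := by
    rwa [Ne, ← map_zero (ofFn (r + 1)), (injective_ofFn _).eq_iff]
  have he : e φ = 0 := injective_ofFn (R := ℝ) _ <| by
    rw [map_zero]
    exact (mul_eq_zero.1 hprod).resolve_right hρ_poly
  simpa using he

theorem vecMul_hankel_surjective {n r : ℕ} (hrn : r < n) {ρ : Fin (r + 1) → ℝ} (hρ : ρ ≠ 0) :
    Function.Surjective fun y => ρ ᵥ* hankel n r hrn y := by
  let f : (Fin n → ℝ) →ₗ[ℝ] Fin (n - r) → ℝ :=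
    { toFun := fun y => ρ ᵥ* hankel n r hrn y
      map_add' := fun y z => vecMul_add (hankel n r hrn y) (hankel n r hrn z) ρ
      map_smul' := fun c y => vecMul_smul ρ c (hankel n r hrn y) }
  change Function.Surjective f
  rw [← LinearMap.range_eq_top]
  by_contra hf
  obtain ⟨φ, hφ0, hφ⟩ := (LinearMap.range f).exists_le_ker_of_lt_top (lt_top_iff_ne_top.2 hf)
  exact hφ0 (eq_zero_of_forall_vecMul_hankel hrn hρ fun y => hφ ⟨y, rfl⟩)

theorem stmt8_general (n N r : ℕ) (hrn : r < n)
    (R : Matrix (Fin 1) (Fin (r + 1)) ℝ) (hR : R ≠ 0) :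
    Function.Surjective (fun y : Fin N → Fin n → ℝ => R * hankelCat n N r hrn y) := by
  have hR0 : R 0 ≠ 0 := fun h => hR (funext fun i => Subsingleton.elim i 0 ▸ h)
  intro T
  choose y hy using fun b => vecMul_hankel_surjective hrn hR0 fun j => T 0 (b, j)
  refine ⟨y, ?_⟩
  ext i ⟨b, j⟩
  rw [Subsingleton.elim i 0]
  exact congrFun (hy b) j

/-- for any nonzero row vector `R ∈ ℝ^{1×(r+1)}`, the linear map
`G_R : ℝ^{Nn} → ℝ^{1×N(n-r)}`, `vec(y₁,…,y_N) ↦ R ⬝ [H_{r+1}(y₁) ⋯ H_{r+1}(y_N)]`,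
is surjective. -/
theorem stmt8 (n N r : ℕ) (hn : 0 < n) (hN : 0 < N) (hr : 0 < r) (hrn : r < n)
    (R : Matrix (Fin 1) (Fin (r + 1)) ℝ) (hR : R ≠ 0) :
    Function.Surjective (fun y : Fin N → Fin n → ℝ => R * hankelCat n N r hrn y) :=
  stmt8_general n N r hrn R hR
end

section
/- Let n ≥ 3 be an integer and let ŷ ∈ ℝⁿ satisfy rank(H₂(ŷ)) = 2, where H₂(ŷ) ∈ ℝ^{2×(n−1)} is the 2-row Hankel matrix of ŷ. Suppose y* ∈ ℝⁿ is a global minimizer of the problem: minimize (1/2)‖y − ŷ‖² subject to rank(H₂(y)) ≤ 1; that is, rank(H₂(y*)) ≤ 1 and ‖y* − ŷ‖ ≤ ‖y − ŷ‖ for every y ∈ ℝⁿ with rank(H₂(y)) ≤ 1. Then rank(H₂(y*)) = 1. -/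
/-!
If `H₂(y*)` had rank zero, then `y* = 0`, so `‖ŷ‖` would be the distance from `ŷ` to the set of
`y` with `rank H₂(y) ≤ 1`. But every geometric sequence `(r^k)` has a rank-one Hankel matrix, and
by Vandermonde these sequences span `ℝⁿ`; as `ŷ ≠ 0`, one of them is not orthogonal to `ŷ`, and the
orthogonal projection of `ŷ` onto its line is a feasible point strictly closer to `ŷ` than `0`.
-/

open RealInnerProductSpace

/-- The 2-row Hankel operator `H₂ : ℝⁿ → ℝ^{2×(n-1)}` (0-based indices):
`(H₂ y)(i,j) = y (i + j)`. -/
def hankel2 (n : ℕ) (hn : 1 < n) (y : EuclideanSpace ℝ (Fin n)) :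
    Matrix (Fin 2) (Fin (n - 1)) ℝ :=
  fun i j => y ⟨i.val + j.val, by omega⟩

theorem Matrix.rank_eq_zero_iff {m n K : Type*} [Fintype n] [Field K] {A : Matrix m n K} :
    A.rank = 0 ↔ A = 0 := by
  rw [Matrix.rank, Submodule.finrank_eq_zero, LinearMap.range_eq_bot]
  classical exact Matrix.toLin'.map_eq_zero_iff

theorem exists_norm_smul_sub_lt_of_inner_ne_zero {F : Type*} [NormedAddCommGroup F]
    [InnerProductSpace ℝ F] {v x : F} (h : ⟪v, x⟫ ≠ 0) : ∃ t : ℝ, ‖t • v - x‖ < ‖x‖ := by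
  have hv : v ≠ 0 := by rintro rfl; simp at h
  refine ⟨⟪v, x⟫ / ‖v‖ ^ 2, ?_⟩
  have hv2 : 0 < ‖v‖ ^ 2 := by positivity
  have key : ‖(⟪v, x⟫ / ‖v‖ ^ 2) • v - x‖ ^ 2 = ‖x‖ ^ 2 - ⟪v, x⟫ ^ 2 / ‖v‖ ^ 2 := by
    rw [norm_sub_sq_real, norm_smul, real_inner_smul_left, Real.norm_eq_abs, mul_pow, sq_abs]
    field_simp
    ring
  have gain : 0 < ⟪v, x⟫ ^ 2 / ‖v‖ ^ 2 := by positivity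
  exact (pow_lt_pow_iff_left₀ (norm_nonneg _) (norm_nonneg _) two_ne_zero).mp (by linarith)

theorem hankel2_eq_zero_iff {n : ℕ} (hn : 1 < n) {y : EuclideanSpace ℝ (Fin n)} :
    hankel2 n hn y = 0 ↔ y = 0 := by
  refine ⟨fun h => ?_, fun h => by subst h; rfl⟩
  ext k
  have entry (i : Fin 2) (j : Fin (n - 1)) (hij : i.val + j.val = k.val) : y k = 0 := by
    have := congrFun (congrFun h i) j
    rwa [show k = ⟨i.val + j.val, by omega⟩ from Fin.ext hij.symm]
  by_cases hk : k.val < n - 1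
  · exact entry 0 ⟨k, hk⟩ (by simp)
  · exact entry 1 ⟨k - 1, by omega⟩ (by simp; omega)

def geomVec (n : ℕ) (r : ℝ) : EuclideanSpace ℝ (Fin n) :=
  WithLp.toLp 2 fun k => r ^ (k : ℕ)

theorem hankel2_smul_geomVec {n : ℕ} (hn : 1 < n) (t r : ℝ) :
    hankel2 n hn (t • geomVec n r) =
      Matrix.vecMulVec (fun i : Fin 2 => t * r ^ (i : ℕ)) fun j : Fin (n - 1) => r ^ (j : ℕ) := by
  ext i j
  simp [hankel2, geomVec, Matrix.vecMulVec_apply, pow_add, mul_assoc]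

theorem rank_hankel2_smul_geomVec_le_one {n : ℕ} (hn : 1 < n) (t r : ℝ) :
    (hankel2 n hn (t • geomVec n r)).rank ≤ 1 := by
  rw [hankel2_smul_geomVec]
  exact Matrix.rank_vecMulVec_le _ _

theorem exists_inner_geomVec_ne_zero {n : ℕ} {y : EuclideanSpace ℝ (Fin n)} (hy : y ≠ 0) :
    ∃ r : ℝ, ⟪geomVec n r, y⟫ ≠ 0 := by
  by_contra! h
  let V := Matrix.vandermonde fun i : Fin n => (i : ℝ)
  have hV : V.det ≠ 0 :=
    Matrix.det_vandermonde_ne_zero_iff.2 fun i j hij => Fin.ext (by exact_mod_cast hij)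
  have hVy : V.mulVec y.ofLp = 0 := by
    ext i
    simpa [V, Matrix.mulVec, dotProduct, geomVec, PiLp.inner_apply, mul_comm] using h i
  exact hy (WithLp.ofLp_injective 2 (Matrix.eq_zero_of_mulVec_eq_zero hV hVy))

/-- if `rank(H₂(ŷ)) = 2` and `y*` is a global minimizer of
`min (1/2)‖y − ŷ‖² s.t. rank(H₂(y)) ≤ 1`, then `rank(H₂(y*)) = 1`. -/
theorem stmt10 (n : ℕ) (hn : 3 ≤ n)
    (yhat : EuclideanSpace ℝ (Fin n))
    (hyhat : Matrix.rank (hankel2 n (by omega) yhat) = 2)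
    (ystar : EuclideanSpace ℝ (Fin n))
    (hfeas : Matrix.rank (hankel2 n (by omega) ystar) ≤ 1)
    (hmin : ∀ y : EuclideanSpace ℝ (Fin n),
        Matrix.rank (hankel2 n (by omega) y) ≤ 1 → ‖ystar - yhat‖ ≤ ‖y - yhat‖) :
    Matrix.rank (hankel2 n (by omega) ystar) = 1 := by
  have hn' : 1 < n := by omega
  suffices Matrix.rank (hankel2 n hn' ystar) ≠ 0 by omega
  intro hrank
  have hystar : ystar = 0 := (hankel2_eq_zero_iff hn').1 (Matrix.rank_eq_zero_iff.1 hrank)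
  have hyhat0 : yhat ≠ 0 := by
    rintro rfl
    rw [(hankel2_eq_zero_iff hn').2 rfl, Matrix.rank_zero] at hyhat
    omega
  obtain ⟨r, hr⟩ := exists_inner_geomVec_ne_zero hyhat0
  obtain ⟨t, hcloser⟩ := exists_norm_smul_sub_lt_of_inner_ne_zero hr
  have hopt := hmin _ (rank_hankel2_smul_geomVec_le_one hn' t r)
  rw [hystar, zero_sub, norm_neg] at hopt
  linarith
end

section
/- Let d be a positive integer, let h : ℝ^d → ℝ be differentiable with ∇h Lipschitz continuous with constant L > 0, and let g : ℝ^d → ℝ. Fix y ∈ ℝ^d and ξ ∈ ℝ^d satisfying the subgradient inequality g(w) ≥ g(y) + ⟨ξ, w − y⟩ for all w ∈ ℝ^d. Let L' > 0 and suppose u ∈ ℝ^d satisfies ‖u − (y − (1/L')(∇h(y) − ξ))‖ ≤ ‖y − (y − (1/L')(∇h(y) − ξ))‖. Then h(u) − g(u) ≤ h(y) − g(y) + ((L − L')/2)‖u − y‖². In particular, if L' ≥ L + c for some c > 0, then h(u) − g(u) ≤ h(y) − g(y) − (c/2)‖u − y‖². -/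
/-!
The descent lemma bounds `h u` above by its linearization at `y` plus `(L/2)‖u - y‖²`, and the
subgradient inequality bounds `-g u` above by the linearization of `-g` at `y`. Their sum has
linear part `⟪∇h(y) - ξ, u - y⟫`, and expanding `‖(u - y) + s‖² ≤ ‖s‖²` for the step
`s = (1/L')(∇h(y) - ξ)` shows that this is at most `-(L'/2)‖u - y‖²`.
-/

open scoped RealInnerProductSpace

section

variable {E : Type*} [NormedAddCommGroup E] [InnerProductSpace ℝ E]

theorem sq_norm_le_neg_two_mul_inner_of_norm_add_le {a s : E} (h : ‖a + s‖ ≤ ‖s‖) :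
    ‖a‖ ^ 2 ≤ -(2 * ⟪a, s⟫) := by
  have := pow_le_pow_left₀ (norm_nonneg _) h 2
  rw [norm_add_sq_real] at this
  linarith

theorem inner_le_neg_mul_sq_of_norm_sub_step_le {p u y : E} {L' : ℝ} (hL' : 0 < L')
    (hu : ‖u - (y - (1 / L') • p)‖ ≤ ‖y - (y - (1 / L') • p)‖) :
    ⟪p, u - y⟫ ≤ -(L' / 2) * ‖u - y‖ ^ 2 := by
  rw [sub_sub_cancel, show u - (y - (1 / L') • p) = (u - y) + (1 / L') • p by abel] at hu
  have key := sq_norm_le_neg_two_mul_inner_of_norm_add_le hu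
  rw [real_inner_smul_right, real_inner_comm] at key
  have := mul_le_mul_of_nonneg_left key hL'.le
  field_simp at this
  linarith

variable [CompleteSpace E]

theorem HasGradientAt.hasDerivAt_comp_add_smul {f : E → ℝ} {f' x v : E} {t : ℝ}
    (hf : HasGradientAt f f' (x + t • v)) :
    HasDerivAt (fun s : ℝ ↦ f (x + s • v)) ⟪f', v⟫ t := by
  have hline : HasDerivAt (fun s : ℝ ↦ x + s • v) v t := by
    simpa using ((hasDerivAt_id t).smul_const v).const_add x
  have := hf.hasFDerivAt.comp_hasDerivAt t hline
  simp only [InnerProductSpace.toDual_apply_apply] at this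
  exact this

theorem le_add_inner_add_of_lipschitz_gradient {f : E → ℝ} {f' : E → E}
    (hf : ∀ x, HasGradientAt f (f' x) x) {L : ℝ} (hlip : ∀ x y, ‖f' x - f' y‖ ≤ L * ‖x - y‖)
    (x y : E) : f y ≤ f x + ⟪f' x, y - x⟫ + L / 2 * ‖y - x‖ ^ 2 := by
  set v := y - x
  let φ : ℝ → ℝ := fun t ↦ f (x + t • v) - t * ⟪f' x, v⟫ - L / 2 * t ^ 2 * ‖v‖ ^ 2
  have hφ : ∀ t, HasDerivAt φ (⟪f' (x + t • v) - f' x, v⟫ - L * t * ‖v‖ ^ 2) t := by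
    intro t
    refine ((((hf (x + t • v)).hasDerivAt_comp_add_smul).sub
      ((hasDerivAt_id t).mul_const ⟪f' x, v⟫)).sub
      (((hasDerivAt_pow 2 t).const_mul (L / 2)).mul_const (‖v‖ ^ 2))).congr_deriv ?_
    rw [inner_sub_left]
    ring
  have hφ_anti : AntitoneOn φ (Set.Icc 0 1) := by
    refine antitoneOn_of_hasDerivWithinAt_nonpos (convex_Icc 0 1)
      (fun t _ ↦ (hφ t).continuousAt.continuousWithinAt) (fun t _ ↦ (hφ t).hasDerivWithinAt) ?_
    intro t ht
    rw [interior_Icc] at ht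
    have : ⟪f' (x + t • v) - f' x, v⟫ ≤ L * t * ‖v‖ ^ 2 := calc
      _ ≤ ‖f' (x + t • v) - f' x‖ * ‖v‖ := real_inner_le_norm _ _
      _ ≤ L * ‖(x + t • v) - x‖ * ‖v‖ := by gcongr; exact hlip _ _
      _ = L * t * ‖v‖ ^ 2 := by
        rw [add_sub_cancel_left, norm_smul, Real.norm_of_nonneg ht.1.le]; ring
    linarith
  have := hφ_anti (Set.left_mem_Icc.2 zero_le_one) (Set.right_mem_Icc.2 zero_le_one) zero_le_one
  simp only [φ, one_smul, add_sub_cancel, zero_smul, add_zero, v] at this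
  linarith

end

theorem stmt14_general (d : ℕ)
    (h g : EuclideanSpace ℝ (Fin d) → ℝ)
    (h' : EuclideanSpace ℝ (Fin d) → EuclideanSpace ℝ (Fin d))
    (hdiff : ∀ x, HasGradientAt h (h' x) x)
    (L : ℝ)
    (hlip : ∀ x y, ‖h' x - h' y‖ ≤ L * ‖x - y‖)
    (y ξ : EuclideanSpace ℝ (Fin d))
    (hsub : ∀ w, g y + ⟪ξ, w - y⟫ ≤ g w)
    (L' : ℝ) (hL' : 0 < L')
    (u : EuclideanSpace ℝ (Fin d))
    (hu : ‖u - (y - (1 / L') • (h' y - ξ))‖ ≤ ‖y - (y - (1 / L') • (h' y - ξ))‖) :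
    h u - g u ≤ h y - g y + ((L - L') / 2) * ‖u - y‖ ^ 2
    ∧ ∀ c : ℝ, 0 < c → L + c ≤ L' → h u - g u ≤ h y - g y - (c / 2) * ‖u - y‖ ^ 2 := by
  have descent := le_add_inner_add_of_lipschitz_gradient hdiff hlip y u
  have step := inner_le_neg_mul_sq_of_norm_sub_step_le hL' hu
  rw [inner_sub_left] at step
  have decrease : h u - g u ≤ h y - g y + ((L - L') / 2) * ‖u - y‖ ^ 2 := by
    linarith [hsub u]
  refine ⟨decrease, fun c _ hcL' ↦ ?_⟩
  have : (L - L') / 2 * ‖u - y‖ ^ 2 ≤ -(c / 2) * ‖u - y‖ ^ 2 :=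
    mul_le_mul_of_nonneg_right (by linarith) (sq_nonneg _)
  linarith

/-- sufficient decrease from a pseudo-projection step: if `h` is differentiable
with `L`-Lipschitz gradient `h'`, `ξ` is a subgradient of `g` at `y`, and `u` is at least as
close to the gradient-step point `y − (1/L')(∇h(y) − ξ)` as `y` is, then
`h(u) − g(u) ≤ h(y) − g(y) + ((L − L')/2)‖u − y‖²`; in particular, if `L' ≥ L + c` for some
`c > 0`, then `h(u) − g(u) ≤ h(y) − g(y) − (c/2)‖u − y‖²`. -/
theorem stmt14 (d : ℕ) (hd : 0 < d)
    (h g : EuclideanSpace ℝ (Fin d) → ℝ)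
    (h' : EuclideanSpace ℝ (Fin d) → EuclideanSpace ℝ (Fin d))
    (hdiff : ∀ x, HasGradientAt h (h' x) x)
    (L : ℝ) (hL : 0 < L)
    (hlip : ∀ x y, ‖h' x - h' y‖ ≤ L * ‖x - y‖)
    (y ξ : EuclideanSpace ℝ (Fin d))
    (hsub : ∀ w, g y + ⟪ξ, w - y⟫ ≤ g w)
    (L' : ℝ) (hL' : 0 < L')
    (u : EuclideanSpace ℝ (Fin d))
    (hu : ‖u - (y - (1 / L') • (h' y - ξ))‖ ≤ ‖y - (y - (1 / L') • (h' y - ξ))‖) :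
    h u - g u ≤ h y - g y + ((L - L') / 2) * ‖u - y‖ ^ 2
    ∧ ∀ c : ℝ, 0 < c → L + c ≤ L' → h u - g u ≤ h y - g y - (c / 2) * ‖u - y‖ ^ 2 :=
  stmt14_general d h g h' hdiff L hlip y ξ hsub L' hL' u hu
end

section
/- Let E be ℝ^m with the Euclidean norm (or any complete real normed vector space). Let ȳ ∈ E, c₀ ∈ (0,1), ε > 0, and let (x^t)_{t≥0}, (z^t)_{t≥0} be sequences in E such that for all t ≥ 0: (i) ‖z^{t+1} − x^t‖ ≤ ‖z^t − x^t‖; (ii) ‖x^{t+1} − z^{t+1}‖ ≤ ‖x^t − z^{t+1}‖; and (iii) if ‖z^{t+1} − ȳ‖ ≤ ε/2 and ‖z^{t+1} − x^t‖ ≤ ε/2, then ‖x^{t+1} − z^{t+1}‖ ≤ c₀‖x^t − z^{t+1}‖. Set γ := ‖x⁰ − ȳ‖ + ‖z⁰ − x⁰‖ and assume γ < (1 − c₀)ε/4. Then for all t ≥ 0 the inequalities ‖z^{t+1} − x^t‖ ≤ γ c₀^t, ‖z^{t+1} − ȳ‖ ≤ 2γ(1 − c₀^{t+1})/(1 − c₀)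 and ‖x^{t+1} − z^{t+1}‖ ≤ γ c₀^{t+1} hold, and there exists y* ∈ E such that both sequences converge to y* with ‖z^t − y*‖ ≤ 2γ c₀^t/(1 − c₀) and ‖x^t − y*‖ ≤ γ c₀^t (1 + c₀)/(1 − c₀) for every t ≥ 0; in particular both sequences converge to the common limit R-linearly. -/
/-!
By induction the iterates never leave the region where the local contraction (iii) applies:
each step multiplies the gap `‖x − z‖` by `c₀`, while the drift of `z` away from `ȳ` is bounded
by the geometric sum `2γ ∑ c₀ᵏ ≤ 2γ/(1 − c₀) < ε/2`. Consecutive `z`'s are then `2γ c₀ᵗ` apart,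
so `z` is Cauchy, and `x` has the same limit because `xᵗ` is `γ c₀ᵗ`-close to `zᵗ⁺¹`.
-/

open Filter Topology

lemma pow_add_one_sub_pow_div_one_sub {c : ℝ} (hc : c ≠ 1) (n : ℕ) :
    c ^ n + (1 - c ^ n) / (1 - c) = (1 - c ^ (n + 1)) / (1 - c) := by
  have : 1 - c ≠ 0 := sub_ne_zero.2 hc.symm
  field_simp
  ring

section AlternatingIterates

variable {E : Type*} [SeminormedAddCommGroup E] {x z : ℕ → E} {ybar : E} {c γ ε : ℝ}

lemma norm_sub_le_of_local_contraction
    (h3 : ∀ t : ℕ, ‖z (t + 1) - ybar‖ ≤ ε / 2 → ‖z (t + 1) - x t‖ ≤ ε / 2 →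
        ‖x (t + 1) - z (t + 1)‖ ≤ c * ‖x t - z (t + 1)‖)
    (hc0 : 0 ≤ c) (hc1 : c < 1) (hγ0 : 0 ≤ γ) (hγε : 4 * γ ≤ (1 - c) * ε) {t : ℕ}
    (hzx : ‖z (t + 1) - x t‖ ≤ γ * c ^ t)
    (hzy : ‖z (t + 1) - ybar‖ ≤ 2 * γ * (1 - c ^ (t + 1)) / (1 - c)) :
    ‖x (t + 1) - z (t + 1)‖ ≤ γ * c ^ (t + 1) := by
  have hc1' : 0 < 1 - c := sub_pos.2 hc1
  have hpow1 : c ^ t ≤ 1 := pow_le_one₀ hc0 hc1.le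
  have hdrift : ‖z (t + 1) - ybar‖ ≤ ε / 2 := by
    refine hzy.trans ((div_le_iff₀ hc1').2 ?_)
    nlinarith [pow_nonneg hc0 (t + 1)]
  have hε : 0 ≤ ε := nonneg_of_mul_nonneg_right (by linarith) hc1'
  have hgap : ‖z (t + 1) - x t‖ ≤ ε / 2 := by
    nlinarith [mul_le_of_le_one_right hγ0 hpow1, mul_nonneg hc0 hε]
  calc ‖x (t + 1) - z (t + 1)‖ ≤ c * ‖z (t + 1) - x t‖ := by
        simpa only [norm_sub_rev (x t)] using h3 t hdrift hgap
    _ ≤ c * (γ * c ^ t) := by gcongr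
    _ = γ * c ^ (t + 1) := by ring

lemma iterate_bounds
    (h1 : ∀ t : ℕ, ‖z (t + 1) - x t‖ ≤ ‖z t - x t‖)
    (h3 : ∀ t : ℕ, ‖z (t + 1) - ybar‖ ≤ ε / 2 → ‖z (t + 1) - x t‖ ≤ ε / 2 →
        ‖x (t + 1) - z (t + 1)‖ ≤ c * ‖x t - z (t + 1)‖)
    (hc0 : 0 ≤ c) (hc1 : c < 1) (hγ : ‖x 0 - ybar‖ + ‖z 0 - x 0‖ ≤ γ)
    (hγε : 4 * γ ≤ (1 - c) * ε) (t : ℕ) :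
    ‖z (t + 1) - x t‖ ≤ γ * c ^ t
      ∧ ‖z (t + 1) - ybar‖ ≤ 2 * γ * (1 - c ^ (t + 1)) / (1 - c)
      ∧ ‖x (t + 1) - z (t + 1)‖ ≤ γ * c ^ (t + 1) := by
  have hγ0 : 0 ≤ γ := le_trans (by positivity) hγ
  have hgeom (n : ℕ) : 2 * γ * (1 - c ^ (n + 1)) / (1 - c)
      = 2 * (γ * c ^ n) + 2 * γ * (1 - c ^ n) / (1 - c) := by
    rw [mul_div_assoc, mul_div_assoc, ← pow_add_one_sub_pow_div_one_sub hc1.ne]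
    ring
  suffices ‖z (t + 1) - x t‖ ≤ γ * c ^ t
      ∧ ‖z (t + 1) - ybar‖ ≤ 2 * γ * (1 - c ^ (t + 1)) / (1 - c) from
    ⟨this.1, this.2, norm_sub_le_of_local_contraction h3 hc0 hc1 hγ0 hγε this.1 this.2⟩
  induction t with
  | zero =>
    have hzx : ‖z 1 - x 0‖ ≤ ‖z 0 - x 0‖ := h1 0
    have hzy : ‖z 1 - ybar‖ ≤ ‖z 1 - x 0‖ + ‖x 0 - ybar‖ := norm_sub_le_norm_sub_add_norm_sub _ _ _
    rw [hgeom]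
    simp only [pow_zero, mul_one, sub_self, mul_zero, zero_div, add_zero]
    constructor <;> linarith [norm_nonneg (x 0 - ybar)]
  | succ t ih =>
    have hxz := norm_sub_le_of_local_contraction h3 hc0 hc1 hγ0 hγε ih.1 ih.2
    have hzx : ‖z (t + 2) - x (t + 1)‖ ≤ γ * c ^ (t + 1) :=
      (h1 (t + 1)).trans (by rwa [norm_sub_rev])
    refine ⟨hzx, ?_⟩
    rw [hgeom]
    linarith [ih.2, norm_sub_le_norm_sub_add_norm_sub (z (t + 2)) (x (t + 1)) ybar,
      norm_sub_le_norm_sub_add_norm_sub (x (t + 1)) (z (t + 1)) ybar]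

lemma dist_succ_le_of_iterate_bounds (hγ : ‖x 0 - ybar‖ + ‖z 0 - x 0‖ ≤ γ)
    (hzx : ∀ t : ℕ, ‖z (t + 1) - x t‖ ≤ γ * c ^ t)
    (hxz : ∀ t : ℕ, ‖x (t + 1) - z (t + 1)‖ ≤ γ * c ^ (t + 1)) (n : ℕ) :
    dist (z n) (z (n + 1)) ≤ 2 * γ * c ^ n := by
  have hgap : ‖x n - z n‖ ≤ γ * c ^ n := by
    cases n with
    | zero =>
      rw [norm_sub_rev, pow_zero, mul_one]
      linarith [norm_nonneg (x 0 - ybar)]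
    | succ n => exact hxz n
  calc dist (z n) (z (n + 1)) = ‖z (n + 1) - z n‖ := dist_comm _ _ |>.trans (dist_eq_norm _ _)
    _ ≤ ‖z (n + 1) - x n‖ + ‖x n - z n‖ := norm_sub_le_norm_sub_add_norm_sub _ _ _
    _ ≤ 2 * γ * c ^ n := by linarith [hzx n]

lemma norm_sub_limit_le (hc1 : c < 1) {ystar : E}
    (hzx : ∀ t : ℕ, ‖z (t + 1) - x t‖ ≤ γ * c ^ t)
    (hz : ∀ t : ℕ, ‖z t - ystar‖ ≤ 2 * γ * c ^ t / (1 - c)) (t : ℕ) :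
    ‖x t - ystar‖ ≤ γ * c ^ t * (1 + c) / (1 - c) := by
  have hc1' : 1 - c ≠ 0 := (sub_pos.2 hc1).ne'
  calc ‖x t - ystar‖ ≤ ‖x t - z (t + 1)‖ + ‖z (t + 1) - ystar‖ :=
        norm_sub_le_norm_sub_add_norm_sub _ _ _
    _ ≤ γ * c ^ t + 2 * γ * c ^ (t + 1) / (1 - c) := by
        gcongr
        · rw [norm_sub_rev]; exact hzx t
        · exact hz (t + 1)
    _ = γ * c ^ t * (1 + c) / (1 - c) := by field_simp; ring

end AlternatingIterates

theorem stmt15_general (E : Type*) [NormedAddCommGroup E] [CompleteSpace E]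
    (ybar : E) (c0 : ℝ) (hc0 : 0 < c0) (hc1 : c0 < 1) (eps : ℝ)
    (x z : ℕ → E)
    (h1 : ∀ t : ℕ, ‖z (t + 1) - x t‖ ≤ ‖z t - x t‖)
    (h3 : ∀ t : ℕ, ‖z (t + 1) - ybar‖ ≤ eps / 2 → ‖z (t + 1) - x t‖ ≤ eps / 2 →
        ‖x (t + 1) - z (t + 1)‖ ≤ c0 * ‖x t - z (t + 1)‖)
    (γ : ℝ) (hγ : γ = ‖x 0 - ybar‖ + ‖z 0 - x 0‖)
    (hγlt : γ < (1 - c0) * eps / 4) :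
    (∀ t : ℕ,
        ‖z (t + 1) - x t‖ ≤ γ * c0 ^ t
        ∧ ‖z (t + 1) - ybar‖ ≤ 2 * γ * (1 - c0 ^ (t + 1)) / (1 - c0)
        ∧ ‖x (t + 1) - z (t + 1)‖ ≤ γ * c0 ^ (t + 1))
    ∧ ∃ ystar : E,
        Filter.Tendsto z Filter.atTop (nhds ystar)
        ∧ Filter.Tendsto x Filter.atTop (nhds ystar)
        ∧ ∀ t : ℕ, ‖z t - ystar‖ ≤ 2 * γ * c0 ^ t / (1 - c0)
            ∧ ‖x t - ystar‖ ≤ γ * c0 ^ t * (1 + c0) / (1 - c0) := by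
  have bounds := iterate_bounds h1 h3 hc0.le hc1 hγ.ge (by linarith)
  refine ⟨bounds, ?_⟩
  have hstep := dist_succ_le_of_iterate_bounds hγ.ge (fun t => (bounds t).1) (fun t => (bounds t).2.2)
  obtain ⟨ystar, hz⟩ := cauchySeq_tendsto_of_complete (cauchySeq_of_le_geometric c0 _ hc1 hstep)
  have hz_rate (t : ℕ) : ‖z t - ystar‖ ≤ 2 * γ * c0 ^ t / (1 - c0) := by
    simpa only [dist_eq_norm] using dist_le_of_le_geometric_of_tendsto c0 _ hc1 hstep hz t
  have hx_rate := norm_sub_limit_le hc1 (fun t => (bounds t).1) hz_rate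
  have hrate : Tendsto (fun t => γ * c0 ^ t * (1 + c0) / (1 - c0)) atTop (𝓝 0) := by
    simpa using (((tendsto_pow_atTop_nhds_zero_of_lt_one hc0.le hc1).const_mul γ).mul_const
      (1 + c0)).div_const (1 - c0)
  have hx : Tendsto x atTop (𝓝 ystar) :=
    tendsto_iff_norm_sub_tendsto_zero.2 (squeeze_zero (fun _ => norm_nonneg _) hx_rate hrate)
  exact ⟨ystar, hz, hx, fun t => ⟨hz_rate t, hx_rate t⟩⟩

/-- R-linear convergence of the alternating pseudo-projection iterates: given
sequences `(x^t)`, `(z^t)` in a complete real normed space satisfying the nonexpansiveness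
conditions (i), (ii) and the local contraction condition (iii), if
`γ := ‖x⁰ − ȳ‖ + ‖z⁰ − x⁰‖ < (1 − c₀)ε/4`, then the stated geometric bounds hold and both
sequences converge R-linearly to a common limit `y*`. -/
theorem stmt15 (E : Type*) [NormedAddCommGroup E] [NormedSpace ℝ E] [CompleteSpace E]
    (ybar : E) (c0 : ℝ) (hc0 : 0 < c0) (hc1 : c0 < 1) (eps : ℝ) (heps : 0 < eps)
    (x z : ℕ → E)
    (h1 : ∀ t : ℕ, ‖z (t + 1) - x t‖ ≤ ‖z t - x t‖)
    (h2 : ∀ t : ℕ, ‖x (t + 1) - z (t + 1)‖ ≤ ‖x t - z (t + 1)‖)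
    (h3 : ∀ t : ℕ, ‖z (t + 1) - ybar‖ ≤ eps / 2 → ‖z (t + 1) - x t‖ ≤ eps / 2 →
        ‖x (t + 1) - z (t + 1)‖ ≤ c0 * ‖x t - z (t + 1)‖)
    (γ : ℝ) (hγ : γ = ‖x 0 - ybar‖ + ‖z 0 - x 0‖)
    (hγlt : γ < (1 - c0) * eps / 4) :
    (∀ t : ℕ,
        ‖z (t + 1) - x t‖ ≤ γ * c0 ^ t
        ∧ ‖z (t + 1) - ybar‖ ≤ 2 * γ * (1 - c0 ^ (t + 1)) / (1 - c0)
        ∧ ‖x (t + 1) - z (t + 1)‖ ≤ γ * c0 ^ (t + 1))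
    ∧ ∃ ystar : E,
        Filter.Tendsto z Filter.atTop (nhds ystar)
        ∧ Filter.Tendsto x Filter.atTop (nhds ystar)
        ∧ ∀ t : ℕ, ‖z t - ystar‖ ≤ 2 * γ * c0 ^ t / (1 - c0)
            ∧ ‖x t - ystar‖ ≤ γ * c0 ^ t * (1 + c0) / (1 - c0) :=
  stmt15_general E ybar c0 hc0 hc1 eps x z h1 h3 γ hγ hγlt
end
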